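/- There exists an absolute constant C > 0 such that, uniformly for all real x, y with 2 ≤ y ≤ x, the number Ψ(x, y) of positive integers n ≤ x having no prime divisor > y satisfies Ψ(x, y) ≤ C · x · e^{-u/2}, where u = (log x)/(log y). -/

import Mathlib

/-!
Weight the count by `log n`. Writing `log n = ∑_{p^k ∣ n} log p` and counting the multiples of
`p^k` among the `y`-smooth `n ≤ N` gives `∑ log n ≤ ∑_{p ≤ y, k ≥ 1} log p · Ψ(N / p^k, y)`.
With `σ = 1 - 1/(2 log y)`, a bound `Ψ(M, y) ≤ C M^σ` for `M < N` turns the right side into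
`C N^σ ∑_p log p ∑_k p^{-kσ}`, and `p^{-σ} ≤ e^{1/2}/p` together with Chebyshev's
`∑_{p ≤ y} log p / p ≪ log y` bounds it by `O(C N^σ log y)`. Since all but `N^{1/4}` of the
counted `n` exceed `N^{1/4}`, the left side is at least `(Ψ(N, y) - N^{1/4}) log N / 4`; so the
bound propagates to `N` as soon as `log N ≫ log y`, while for smaller `N` the trivial
`Ψ(N, y) ≤ N = N^σ e^{log N / (2 log y)}` suffices. Finally `x^σ = x e^{-u/2}`.
-/

open scoped Classical

noncomputable def smoothUpTo (y : ℝ) (N : ℕ) : Finset ℕ :=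
  (Finset.Icc 1 N).filter (fun n => ∀ p : ℕ, p.Prime → p ∣ n → (p : ℝ) ≤ y)

noncomputable def psiExponent (y : ℝ) : ℝ := 1 - 1 / (2 * Real.log y)

section

open Real Finset

theorem mem_smoothUpTo {y : ℝ} {N n : ℕ} :
    n ∈ smoothUpTo y N ↔ (1 ≤ n ∧ n ≤ N) ∧ ∀ p : ℕ, p.Prime → p ∣ n → (p : ℝ) ≤ y := by
  rw [smoothUpTo, mem_filter, mem_Icc]

theorem card_smoothUpTo_le (y : ℝ) (N : ℕ) : #(smoothUpTo y N) ≤ N := by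
  unfold smoothUpTo
  simpa using card_filter_le (Icc 1 N) _

theorem card_filter_dvd_smoothUpTo_le (y : ℝ) (N d : ℕ) :
    #{n ∈ smoothUpTo y N | d ∣ n} ≤ #(smoothUpTo y (N / d)) := by
  refine (card_le_card fun n hn => ?_).trans (card_image_le (f := (d * ·)))
  obtain ⟨hn, m, rfl⟩ := mem_filter.1 hn
  obtain ⟨⟨hn1, hnN⟩, hsmooth⟩ := mem_smoothUpTo.1 hn
  have hd : 0 < d := Nat.pos_of_mul_pos_right hn1
  refine mem_image.2 ⟨m, mem_smoothUpTo.2 ⟨⟨Nat.pos_of_mul_pos_left hn1, ?_⟩, ?_⟩, rfl⟩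
  · exact (Nat.le_div_iff_mul_le hd).2 (by rwa [mul_comm])
  · exact fun p hp hpm => hsmooth p hp (dvd_mul_of_dvd_right hpm d)

theorem log_natCast_eq_sum_card_pow_dvd {n N : ℕ} {P : Finset ℕ} (hn : 0 < n) (hnN : n ≤ N)
    (hP : ∀ p ∈ P, p.Prime) (hnP : n.primeFactors ⊆ P) :
    log n = ∑ p ∈ P, #{k ∈ Ico 1 N | p ^ k ∣ n} * log p := by
  rw [log_nat_eq_sum_factorization,
    Finsupp.sum_of_support_subset _ (by simpa using hnP) _ fun _ _ => by simp]
  refine sum_congr rfl fun p hp => ?_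
  rw [Nat.factorization_eq_card_pow_dvd_of_lt (hP p hp) hn]
  calc n ≤ N := hnN
    _ < 2 ^ N := N.lt_two_pow_self
    _ ≤ p ^ N := Nat.pow_le_pow_left (hP p hp).two_le N

theorem sum_log_smoothUpTo_eq (y : ℝ) (N : ℕ) :
    ∑ n ∈ smoothUpTo y N, log n =
      ∑ p ∈ Nat.primesLE ⌊y⌋₊, ∑ k ∈ Ico 1 N, #{n ∈ smoothUpTo y N | p ^ k ∣ n} * log p := by
  calc ∑ n ∈ smoothUpTo y N, log n
      = ∑ n ∈ smoothUpTo y N, ∑ p ∈ Nat.primesLE ⌊y⌋₊, #{k ∈ Ico 1 N | p ^ k ∣ n} * log p := by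
        refine sum_congr rfl fun n hn => ?_
        obtain ⟨⟨hn1, hnN⟩, hsmooth⟩ := mem_smoothUpTo.1 hn
        refine log_natCast_eq_sum_card_pow_dvd hn1 hnN (fun p hp => Nat.prime_of_mem_primesLE hp)
          fun p hp => ?_
        have hp' := Nat.prime_of_mem_primeFactors hp
        exact Nat.mem_primesLE.2
          ⟨Nat.le_floor (hsmooth p hp' (Nat.dvd_of_mem_primeFactors hp)), hp'⟩
    _ = _ := by
      rw [sum_comm]
      refine sum_congr rfl fun p _ => ?_
      simp only [card_filter, Nat.cast_sum, Nat.cast_ite, Nat.cast_one, Nat.cast_zero, ← sum_mul]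
      rw [sum_comm]

theorem sum_primesLE_log_div_gt_half_le (n : ℕ) :
    ∑ p ∈ Nat.primesLE n with n / 2 < p, log p / p ≤ 2 * log 4 := by
  rcases n.eq_zero_or_pos with rfl | hn
  · simp [log_nonneg]
  have hn' : (0 : ℝ) < n := by exact_mod_cast hn
  calc ∑ p ∈ Nat.primesLE n with n / 2 < p, log p / p
      ≤ ∑ p ∈ Nat.primesLE n with n / 2 < p, log p * (2 / n) := by
        refine sum_le_sum fun p hp => ?_
        have hp2 : n < 2 * p := by have := (mem_filter.1 hp).2; omega
        have hp0 : (0 : ℝ) < p := by exact_mod_cast (show 0 < p by omega)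
        rw [div_le_iff₀ hp0, mul_assoc]
        refine le_mul_of_one_le_right (log_natCast_nonneg p) ?_
        rw [div_mul_eq_mul_div, one_le_div hn']
        exact_mod_cast hp2.le
    _ ≤ ∑ p ∈ Nat.primesLE n, log p * (2 / n) :=
        sum_le_sum_of_subset_of_nonneg (filter_subset _ _) fun p _ _ => by
          have := log_natCast_nonneg p; positivity
    _ = Chebyshev.theta n * (2 / n) := by rw [Chebyshev.theta_eq_sum_primesLE_log, sum_mul]
    _ ≤ log 4 * n * (2 / n) := by gcongr; exact Chebyshev.theta_le_log4_mul_x hn'.le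
    _ = 2 * log 4 := by field_simp

theorem sum_primesLE_log_div_le (n : ℕ) : ∑ p ∈ Nat.primesLE n, log p / p ≤ 4 * log (2 * n) := by
  induction n using Nat.strong_induction_on with
  | _ n ih =>
  rcases lt_or_ge n 2 with hn | hn
  · interval_cases n <;> simp [log_nonneg]
  have hh : (0 : ℝ) < (n / 2 : ℕ) := by exact_mod_cast (by omega : 0 < n / 2)
  have hlow : {p ∈ Nat.primesLE n | p ≤ n / 2} = Nat.primesLE (n / 2) := by
    ext p
    simp only [mem_filter, Nat.mem_primesLE]
    exact ⟨fun ⟨⟨_, hp⟩, h⟩ => ⟨h, hp⟩, fun ⟨h, hp⟩ => ⟨⟨by omega, hp⟩, h⟩⟩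
  have hlog4 : log 4 = 2 * log 2 := by
    rw [show (4 : ℝ) = 2 ^ 2 by norm_num, Real.log_pow]; push_cast; ring
  calc ∑ p ∈ Nat.primesLE n, log p / p
      = ∑ p ∈ Nat.primesLE (n / 2), log p / p + ∑ p ∈ Nat.primesLE n with n / 2 < p, log p / p := by
        simp only [← hlow, ← not_le, sum_filter_add_sum_filter_not]
    _ ≤ 4 * log (2 * (n / 2 : ℕ)) + 2 * log 4 :=
        add_le_add (ih _ (by omega)) (sum_primesLE_log_div_gt_half_le n)
    _ = 4 * log (2 * (2 * (n / 2 : ℕ))) := by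
        rw [log_mul two_ne_zero hh.ne', log_mul two_ne_zero (by positivity),
          log_mul two_ne_zero hh.ne', hlog4]
        ring
    _ ≤ 4 * log (2 * n) := by
        gcongr
        exact_mod_cast (by omega : 2 * (n / 2) ≤ n)

theorem sum_primesLE_floor_log_div_le {y : ℝ} (hy : 2 ≤ y) :
    ∑ p ∈ Nat.primesLE ⌊y⌋₊, log p / p ≤ 8 * log y := by
  have hfloor : (2 : ℝ) ≤ ⌊y⌋₊ := by exact_mod_cast Nat.le_floor (by exact_mod_cast hy)
  calc ∑ p ∈ Nat.primesLE ⌊y⌋₊, log p / p ≤ 4 * log (2 * ⌊y⌋₊) := sum_primesLE_log_div_le _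
    _ ≤ 4 * log (y * y) := by gcongr; exact Nat.floor_le (by linarith)
    _ = 8 * log y := by rw [log_mul (by positivity) (by positivity)]; ring

theorem quarter_le_psiExponent {y : ℝ} (hy : 2 ≤ y) : 1 / 4 ≤ psiExponent y := by
  have hlog : 2 / 3 ≤ log y :=
    (by linarith [log_two_gt_d9] : (2 : ℝ) / 3 ≤ log 2).trans (log_le_log (by norm_num) hy)
  rw [psiExponent, le_sub_comm, div_le_iff₀ (by linarith)]
  linarith

theorem one_sub_psiExponent (y : ℝ) : 1 - psiExponent y = 1 / (2 * log y) := by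
  rw [psiExponent, sub_sub_cancel]

theorem rpow_psiExponent {x : ℝ} (hx : 0 < x) (y : ℝ) :
    x ^ psiExponent y = x * exp (-(log x / log y) / 2) := by
  rw [rpow_def_of_pos hx, psiExponent, ← exp_log hx, ← exp_add, exp_log hx]
  congr 1
  ring

theorem rpow_neg_psiExponent_le_two_div {y p : ℝ} (hy : 2 ≤ y) (hp : 0 < p) (hpy : p ≤ y) :
    p ^ (-psiExponent y) ≤ 2 / p := by
  have hlog : 0 < log y := log_pos (by linarith)
  have hexp : exp (1 / 2) ≤ 2 := by
    have := exp_one_lt_d9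
    nlinarith [exp_pos (1 / 2), show exp (1 / 2) * exp (1 / 2) = exp 1 by rw [← exp_add]; norm_num]
  have hδ : p ^ (1 - psiExponent y) ≤ 2 := calc
    p ^ (1 - psiExponent y) ≤ y ^ (1 - psiExponent y) := by
      gcongr
      rw [one_sub_psiExponent]; positivity
    _ = exp (1 / 2) := by
      rw [rpow_def_of_pos (by linarith), one_sub_psiExponent]
      field_simp
    _ ≤ 2 := hexp
  calc p ^ (-psiExponent y) = p ^ (1 - psiExponent y) / p := by
        rw [rpow_sub hp, rpow_one, rpow_neg hp.le]; field_simp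
    _ ≤ 2 / p := by gcongr

theorem rpow_neg_psiExponent_le_seven_eighths {y p : ℝ} (hy : 2 ≤ y) (hp : 2 ≤ p) :
    p ^ (-psiExponent y) ≤ 7 / 8 := by
  calc p ^ (-psiExponent y) ≤ p ^ (-(1 / 4 : ℝ)) :=
        rpow_le_rpow_of_exponent_le (by linarith) (by linarith [quarter_le_psiExponent hy])
    _ ≤ 2 ^ (-(1 / 4 : ℝ)) := rpow_le_rpow_of_nonpos (by norm_num) hp (by norm_num)
    _ = (1 / 2) ^ ((4 : ℕ)⁻¹ : ℝ) := by
        rw [rpow_neg (by norm_num), ← inv_rpow (by norm_num)]; norm_num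
    _ ≤ ((7 / 8) ^ 4) ^ ((4 : ℕ)⁻¹ : ℝ) := by gcongr; norm_num
    _ = 7 / 8 := pow_rpow_inv_natCast (by norm_num) (by norm_num)

theorem sum_Ico_one_pow_le_eight_mul {q : ℝ} (hq0 : 0 ≤ q) (hq : q ≤ 7 / 8) (N : ℕ) :
    ∑ k ∈ Ico 1 N, q ^ k ≤ 8 * q := by
  calc ∑ k ∈ Ico 1 N, q ^ k ≤ q ^ 1 / (1 - q) := geom_sum_Ico_le_of_lt_one hq0 (by linarith)
    _ ≤ 8 * q := by rw [pow_one, div_le_iff₀ (by linarith)]; nlinarith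

theorem natCast_div_rpow_le (N m : ℕ) {σ : ℝ} (hσ : 0 ≤ σ) :
    ((N / m : ℕ) : ℝ) ^ σ ≤ (N : ℝ) ^ σ * (m : ℝ) ^ (-σ) := by
  rw [rpow_neg (Nat.cast_nonneg m), ← div_eq_mul_inv,
    ← div_rpow (Nat.cast_nonneg N) (Nat.cast_nonneg m)]
  gcongr
  exact Nat.cast_div_le

theorem card_filter_pow_dvd_smoothUpTo_le {y C σ : ℝ} (hC : 0 ≤ C) (hσ : 0 ≤ σ) {N : ℕ}
    (hN : 0 < N) (ih : ∀ M < N, (#(smoothUpTo y M) : ℝ) ≤ C * M ^ σ) {p k : ℕ} (hp : 1 < p)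
    (hk : 1 ≤ k) :
    (#{n ∈ smoothUpTo y N | p ^ k ∣ n} : ℝ) ≤ C * N ^ σ * ((p : ℝ) ^ (-σ)) ^ k := by
  calc (#{n ∈ smoothUpTo y N | p ^ k ∣ n} : ℝ) ≤ #(smoothUpTo y (N / p ^ k)) := by
        exact_mod_cast card_filter_dvd_smoothUpTo_le y N (p ^ k)
    _ ≤ C * ((N / p ^ k : ℕ) : ℝ) ^ σ :=
        ih _ (Nat.div_lt_self hN (Nat.one_lt_pow (by omega) hp))
    _ ≤ C * ((N : ℝ) ^ σ * ((p ^ k : ℕ) : ℝ) ^ (-σ)) := by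
        gcongr; exact natCast_div_rpow_le N (p ^ k) hσ
    _ = C * N ^ σ * ((p : ℝ) ^ (-σ)) ^ k := by
        rw [Nat.cast_pow, ← rpow_pow_comm (Nat.cast_nonneg p)]; ring

theorem sum_card_filter_pow_dvd_mul_log_le {y C : ℝ} (hy : 2 ≤ y) (hC : 0 ≤ C) {N : ℕ}
    (hN : 0 < N) (ih : ∀ M < N, (#(smoothUpTo y M) : ℝ) ≤ C * M ^ psiExponent y) {p : ℕ}
    (hp : p.Prime) (hpy : (p : ℝ) ≤ y) :
    ∑ k ∈ Ico 1 N, #{n ∈ smoothUpTo y N | p ^ k ∣ n} * log p ≤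
      16 * C * N ^ psiExponent y * (log p / p) := by
  set σ := psiExponent y
  have hσ : 0 ≤ σ := by linarith [quarter_le_psiExponent hy]
  have hp2 : (2 : ℝ) ≤ p := by exact_mod_cast hp.two_le
  have hq0 : 0 ≤ (p : ℝ) ^ (-σ) := rpow_nonneg (by positivity) _
  have hlogp := log_natCast_nonneg p
  calc ∑ k ∈ Ico 1 N, #{n ∈ smoothUpTo y N | p ^ k ∣ n} * log p
      ≤ ∑ k ∈ Ico 1 N, C * N ^ σ * ((p : ℝ) ^ (-σ)) ^ k * log p := by
        gcongr with k hk
        exact card_filter_pow_dvd_smoothUpTo_le hC hσ hN ih hp.one_lt (mem_Ico.1 hk).1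
    _ = C * N ^ σ * log p * ∑ k ∈ Ico 1 N, ((p : ℝ) ^ (-σ)) ^ k := by
        rw [mul_sum]; exact sum_congr rfl fun k _ => by ring
    _ ≤ C * N ^ σ * log p * (8 * (2 / p)) := by
        gcongr
        refine (sum_Ico_one_pow_le_eight_mul hq0
          (rpow_neg_psiExponent_le_seven_eighths hy hp2) N).trans ?_
        gcongr
        exact rpow_neg_psiExponent_le_two_div hy (by linarith) hpy
    _ = 16 * C * N ^ σ * (log p / p) := by ring

theorem sum_log_smoothUpTo_le {y C : ℝ} (hy : 2 ≤ y) (hC : 0 ≤ C) {N : ℕ} (hN : 0 < N)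
    (ih : ∀ M < N, (#(smoothUpTo y M) : ℝ) ≤ C * M ^ psiExponent y) :
    ∑ n ∈ smoothUpTo y N, log n ≤ 128 * C * N ^ psiExponent y * log y := by
  set σ := psiExponent y
  calc ∑ n ∈ smoothUpTo y N, log n
      = ∑ p ∈ Nat.primesLE ⌊y⌋₊, ∑ k ∈ Ico 1 N, #{n ∈ smoothUpTo y N | p ^ k ∣ n} * log p :=
        sum_log_smoothUpTo_eq y N
    _ ≤ ∑ p ∈ Nat.primesLE ⌊y⌋₊, 16 * C * N ^ σ * (log p / p) := by
        refine sum_le_sum fun p hp => ?_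
        obtain ⟨hpy, hp⟩ := Nat.mem_primesLE.1 hp
        exact sum_card_filter_pow_dvd_mul_log_le hy hC hN ih hp
          ((Nat.cast_le.2 hpy).trans (Nat.floor_le (by linarith)))
    _ = 16 * C * N ^ σ * ∑ p ∈ Nat.primesLE ⌊y⌋₊, log p / p := by rw [mul_sum]
    _ ≤ 16 * C * N ^ σ * (8 * log y) := by gcongr; exact sum_primesLE_floor_log_div_le hy
    _ = 128 * C * N ^ σ * log y := by ring

theorem card_sub_mul_log_le_sum_log {s : Finset ℕ} (hs : ∀ n ∈ s, 0 < n) {M : ℝ} (hM : 1 ≤ M) :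
    (#s - M) * log M ≤ ∑ n ∈ s, log n := by
  have hsmall : (#{n ∈ s | n ≤ ⌊M⌋₊} : ℝ) ≤ M := by
    have hsub : {n ∈ s | n ≤ ⌊M⌋₊} ⊆ Icc 1 ⌊M⌋₊ := fun n hn => by
      obtain ⟨hns, hnM⟩ := mem_filter.1 hn
      exact mem_Icc.2 ⟨hs n hns, hnM⟩
    calc (#{n ∈ s | n ≤ ⌊M⌋₊} : ℝ) ≤ #(Icc 1 ⌊M⌋₊) := by exact_mod_cast card_le_card hsub
      _ = ⌊M⌋₊ := by simp
      _ ≤ M := Nat.floor_le (by linarith)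
  have hlarge : ∀ n ∈ {n ∈ s | ¬ n ≤ ⌊M⌋₊}, log M ≤ log n := fun n hn =>
    log_le_log (by linarith) (Nat.lt_of_floor_lt (not_le.1 (mem_filter.1 hn).2)).le
  have hsplit := card_filter_add_card_filter_not (s := s) (fun n => n ≤ ⌊M⌋₊)
  calc (#s - M) * log M ≤ #{n ∈ s | ¬ n ≤ ⌊M⌋₊} * log M := by
        gcongr
        · exact log_nonneg hM
        · rw [← hsplit]; push_cast; linarith
    _ ≤ ∑ n ∈ s with ¬ n ≤ ⌊M⌋₊, log n := by
        simpa using card_nsmul_le_sum _ _ _ hlarge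
    _ ≤ ∑ n ∈ s, log n :=
        sum_le_sum_of_subset_of_nonneg (filter_subset _ _) fun n _ _ => log_natCast_nonneg n

theorem natCast_le_exp_mul_rpow_psiExponent {y A : ℝ} (hy : 1 < y) (N : ℕ)
    (hN : log N ≤ 2 * A * log y) : (N : ℝ) ≤ exp A * N ^ psiExponent y := by
  rcases N.eq_zero_or_pos with rfl | hN0
  · rw [Nat.cast_zero]; positivity
  have hN0' : (0 : ℝ) < N := by exact_mod_cast hN0
  have hlog : 0 < log y := log_pos hy
  calc (N : ℝ) = N ^ (1 - psiExponent y) * N ^ psiExponent y := by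
        rw [← rpow_add hN0', sub_add_cancel, rpow_one]
    _ ≤ exp A * N ^ psiExponent y := by
        gcongr
        rw [rpow_def_of_pos hN0', one_sub_psiExponent, exp_le_exp, mul_one_div,
          div_le_iff₀ (by positivity)]
        linarith

theorem card_smoothUpTo_le_rpow {y : ℝ} (hy : 2 ≤ y) (N : ℕ) :
    (#(smoothUpTo y N) : ℝ) ≤ exp 1024 * N ^ psiExponent y := by
  induction N using Nat.strong_induction_on with
  | _ N ih =>
  set σ := psiExponent y
  set C := exp 1024
  rcases N.eq_zero_or_pos with rfl | hN
  · simpa [smoothUpTo] using mul_nonneg (exp_pos 1024).le (rpow_nonneg le_rfl σ)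
  -- The large-`N` step needs `512 log y / log N ≤ 1 / 4`; below that threshold the trivial bound
  -- loses only the factor `N ^ (1 / (2 log y)) ≤ exp 1024`.
  rcases le_or_gt (log N) (2 * 1024 * log y) with hsmall | hlarge
  · exact (Nat.cast_le.2 (card_smoothUpTo_le y N)).trans
      (natCast_le_exp_mul_rpow_psiExponent (by linarith) N hsmall)
  have hN1 : (1 : ℝ) ≤ N := by exact_mod_cast hN
  have hlogy : 0 < log y := log_pos (by linarith)
  have hlogN : 0 < log N := by linarith
  have hquarter : (N : ℝ) ^ (1 / 4 : ℝ) ≤ N ^ σ :=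
    rpow_le_rpow_of_exponent_le hN1 (quarter_le_psiExponent hy)
  have hC : 4 / 3 ≤ C := by linarith [add_one_le_exp 1024]
  have hbound : ((#(smoothUpTo y N) : ℝ) - N ^ (1 / 4 : ℝ)) * (log N / 4) ≤
      128 * C * N ^ σ * log y := by
    calc ((#(smoothUpTo y N) : ℝ) - N ^ (1 / 4 : ℝ)) * (log N / 4)
        = ((#(smoothUpTo y N) : ℝ) - N ^ (1 / 4 : ℝ)) * log (N ^ (1 / 4 : ℝ)) := by
          rw [log_rpow (by positivity)]; ring
      _ ≤ ∑ n ∈ smoothUpTo y N, log n :=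
          card_sub_mul_log_le_sum_log (fun n hn => (mem_smoothUpTo.1 hn).1.1)
            (one_le_rpow hN1 (by norm_num))
      _ ≤ 128 * C * N ^ σ * log y :=
          sum_log_smoothUpTo_le hy (exp_pos _).le hN ih
  have hσ : 0 ≤ (N : ℝ) ^ σ := by positivity
  have hcard : (#(smoothUpTo y N) : ℝ) - N ^ (1 / 4 : ℝ) ≤ C * N ^ σ / 4 := by
    refine le_of_mul_le_mul_right ?_ hlogN
    nlinarith [mul_le_mul_of_nonneg_left hlarge.le (by positivity : 0 ≤ C * N ^ σ)]
  calc (#(smoothUpTo y N) : ℝ) ≤ N ^ σ + C * N ^ σ / 4 := by linarith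
    _ ≤ C * N ^ σ := by nlinarith

end

/-- `Ψ(x,y) ≪ x e^{-u/2}`, `u = log x / log y`, uniformly for `2 ≤ y ≤ x`, where
`Ψ(x,y)` is the number of positive integers `n ≤ x` free of prime divisors `> y`. -/
theorem Psi_upper_bound :
    ∃ C : ℝ, 0 < C ∧ ∀ x y : ℝ, 2 ≤ y → y ≤ x →
      (((Finset.Icc 1 ⌊x⌋₊).filter
          (fun n => ∀ p : ℕ, p.Prime → p ∣ n → (p : ℝ) ≤ y)).card : ℝ) ≤
        C * x * Real.exp (-(Real.log x / Real.log y) / 2) := by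
  refine ⟨Real.exp 1024, Real.exp_pos _, fun x y hy hyx => ?_⟩
  have hx : 0 < x := by linarith
  calc ((smoothUpTo y ⌊x⌋₊).card : ℝ)
      ≤ Real.exp 1024 * (⌊x⌋₊ : ℝ) ^ psiExponent y := card_smoothUpTo_le_rpow hy _
    _ ≤ Real.exp 1024 * x ^ psiExponent y := by
        gcongr
        · linarith [quarter_le_psiExponent hy]
        · exact Nat.floor_le hx.le
    _ = Real.exp 1024 * x * Real.exp (-(Real.log x / Real.log y) / 2) := by
        rw [rpow_psiExponent hx, mul_assoc]
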